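/- arXiv:0704.2713 — 2 statements merged into one kernel-verified Lean document; each statement's English description precedes it below -/
import Mathlib

section
/- Let q ≥ 2 and d ≥ 1 with N = (d+1)(q−1), and let X = {x₀, …, x_N} be N+1 points in ℝ^d in 'strongly general position' (coordinates algebraically independent over ℚ). Then for every Tverberg partition F₁, …, F_q of X the common intersection point of the convex hulls is unique, and each such partition is of Type I (one vertex v together with q−1 many d-simplices containing v) or Type II (k simplices of dimension less than d intersecting in a single point, plus q−k many d-simplices containing that point, for some 1 < k ≤ min{d,q}). -/
open Finset

open Matrix

namespace TvAux

abbrev Rty (d m : ℕ) := Fin (m + 1) ⊕ Fin d × Fin m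

variable {d m : ℕ} {A : Type*} [CommRing A]

/-- number of points -/
abbrev nn (d m : ℕ) : ℕ := (d + 1) * m + 1

/-- the system matrix of a Tverberg-type partition -/
def tvMat (P : Fin (m + 1) → Finset (Fin (nn d m))) (p : Fin (nn d m) → Fin d → A)
    (e : Rty d m ≃ Fin (nn d m)) : Matrix (Rty d m) (Rty d m) A :=
  fun r c => Sum.elim
    (fun i => if e c ∈ P i then 1 else 0)
    (fun jk => ((if e c ∈ P jk.2.succ then 1 else 0) - (if e c ∈ P 0 then 1 else 0)) * p (e c) jk.1) r

def bvec : Rty d m → A := Sum.elim (fun _ => 1) (fun _ => 0)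

lemma tvMat_mulVec_inl (P : Fin (m + 1) → Finset (Fin (nn d m))) (p : Fin (nn d m) → Fin d → A)
    (e : Rty d m ≃ Fin (nn d m)) (μ : Rty d m → A) (i : Fin (m + 1)) :
    (tvMat P p e *ᵥ μ) (Sum.inl i) = ∑ v ∈ P i, μ (e.symm v) := by
  have h1 : (tvMat P p e *ᵥ μ) (Sum.inl i)
      = ∑ c : Rty d m, (fun v => (if v ∈ P i then (1:A) else 0) * μ (e.symm v)) (e c) := by
    simp only [Matrix.mulVec, dotProduct, tvMat, Sum.elim_inl]
    refine Finset.sum_congr rfl fun c _ => ?_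
    rw [e.symm_apply_apply]
  rw [h1, Equiv.sum_comp e (fun v => (if v ∈ P i then (1:A) else 0) * μ (e.symm v))]
  simp [ite_mul, Finset.sum_ite_mem]

end TvAux

namespace TvAux2
open TvAux

variable {d m : ℕ} {A : Type*} [CommRing A]

lemma tvMat_mulVec_inr (P : Fin (m + 1) → Finset (Fin (nn d m))) (p : Fin (nn d m) → Fin d → A)
    (e : Rty d m ≃ Fin (nn d m)) (μ : Rty d m → A) (j : Fin d) (i' : Fin m) :
    (tvMat P p e *ᵥ μ) (Sum.inr (j, i')) =
      (∑ v ∈ P i'.succ, μ (e.symm v) * p v j) - ∑ v ∈ P 0, μ (e.symm v) * p v j := by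
  have h1 : (tvMat P p e *ᵥ μ) (Sum.inr (j, i'))
      = ∑ c : Rty d m, (fun v => ((if v ∈ P i'.succ then (1:A) else 0) - (if v ∈ P 0 then 1 else 0)) * p v j * μ (e.symm v)) (e c) := by
    simp only [Matrix.mulVec, dotProduct, tvMat, Sum.elim_inr]
    refine Finset.sum_congr rfl fun c _ => ?_
    rw [e.symm_apply_apply]
  rw [h1, Equiv.sum_comp e (fun v => ((if v ∈ P i'.succ then (1:A) else 0) - (if v ∈ P 0 then 1 else 0)) * p v j * μ (e.symm v))]
  have key : ∀ v : Fin (nn d m), ((if v ∈ P i'.succ then (1:A) else 0) - (if v ∈ P 0 then 1 else 0)) * p v j * μ (e.symm v)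
      = (if v ∈ P i'.succ then μ (e.symm v) * p v j else 0) - (if v ∈ P 0 then μ (e.symm v) * p v j else 0) := by
    intro v; split_ifs <;> ring
  rw [Finset.sum_congr rfl (fun v _ => key v), Finset.sum_sub_distrib]
  simp [Finset.sum_ite_mem]

/-- characterization of solutions of the linear system -/
lemma tvMat_solution_iff (P : Fin (m + 1) → Finset (Fin (nn d m))) (p : Fin (nn d m) → Fin d → A)
    (e : Rty d m ≃ Fin (nn d m)) (lam : Fin (nn d m) → A) :
    tvMat P p e *ᵥ (fun c => lam (e c)) = bvec ↔
      ((∀ i, ∑ v ∈ P i, lam v = 1) ∧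
       (∀ (j : Fin d) (i' : Fin m), ∑ v ∈ P i'.succ, lam v * p v j = ∑ v ∈ P 0, lam v * p v j)) := by
  have hμ : ∀ v, (fun c => lam (e c)) (e.symm v) = lam v := fun v => by simp
  constructor
  · intro h
    refine ⟨fun i => ?_, fun j i' => ?_⟩
    · have := congrFun h (Sum.inl i)
      rw [tvMat_mulVec_inl] at this
      simp only [hμ] at this
      simpa [bvec] using this
    · have := congrFun h (Sum.inr (j, i'))
      rw [tvMat_mulVec_inr] at this
      simp only [hμ] at this
      simp only [bvec, Sum.elim_inr] at this
      exact sub_eq_zero.1 this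
  · rintro ⟨h1, h2⟩
    funext r
    cases r with
    | inl i => rw [tvMat_mulVec_inl]; simp only [hμ]; simpa [bvec] using h1 i
    | inr jk =>
      rw [tvMat_mulVec_inr]
      simp only [hμ]
      simp [bvec, sub_eq_zero, h2 jk.1 jk.2]

end TvAux2

namespace TvAux3
open TvAux

variable {n' : Type*} [Fintype n'] [DecidableEq n']

lemma updateCol_det_of_mulVec {K : Type*} [CommRing K]
    (M : Matrix n' n' K) (lam b : n' → K) (h : M *ᵥ lam = b) (c : n') :
    (M.updateCol c b).det = M.det * lam c := by
  have h1 : Matrix.cramer M b = M.det • lam := by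
    rw [← h, Matrix.cramer_eq_adjugate_mulVec, Matrix.mulVec_mulVec,
      Matrix.adjugate_mul, Matrix.smul_mulVec, Matrix.one_mulVec]
  have := congrFun h1 c
  rwa [Matrix.cramer_apply, Pi.smul_apply, smul_eq_mul] at this

lemma eq_of_mulVec_eq {K : Type*} [Field K] {M : Matrix n' n' K} (hdet : M.det ≠ 0)
    {a b : n' → K} (h : M *ᵥ a = M *ᵥ b) : a = b := by
  by_contra hab
  have hz : M *ᵥ (a - b) = 0 := by rw [Matrix.mulVec_sub, h, sub_self]
  exact hdet (Matrix.exists_mulVec_eq_zero_iff.1 ⟨a - b, sub_ne_zero.2 hab, hz⟩)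

lemma det_ne_zero_of_unique_solution {K : Type*} [Field K] {M : Matrix n' n' K} {b : n' → K}
    (μ : n' → K) (hμ : M *ᵥ μ = b) (huniq : ∀ ν, M *ᵥ ν = b → ν = μ) : M.det ≠ 0 := by
  intro hdet
  obtain ⟨z, hz, hz0⟩ := Matrix.exists_mulVec_eq_zero_iff.2 hdet
  have : M *ᵥ (μ + z) = b := by rw [Matrix.mulVec_add, hμ, hz0, add_zero]
  have := huniq _ this
  exact hz (by simpa using congrArg (· - μ) this)

variable {d m : ℕ} {A : Type*} [CommRing A] {B : Type*} [CommRing B]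

lemma tvMat_map (f : A →+* B) (P : Fin (m + 1) → Finset (Fin (nn d m)))
    (p : Fin (nn d m) → Fin d → A) (e : Rty d m ≃ Fin (nn d m)) :
    (tvMat P p e).map f = tvMat P (fun v j => f (p v j)) e := by
  funext r c
  cases r with
  | inl i => simp [tvMat, Matrix.map_apply, apply_ite f]
  | inr jk => simp [tvMat, Matrix.map_apply, apply_ite f]

lemma bvec_map (f : A →+* B) : (f ∘ (bvec : Rty d m → A)) = bvec := by
  funext r
  cases r with
  | inl i => simp [bvec]
  | inr jk => simp [bvec]

lemma updateCol_map (f : A →+* B) (M : Matrix n' n' A) (c : n') (b : n' → A) :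
    (M.updateCol c b).map f = (M.map f).updateCol c (f ∘ b) := by
  funext i j
  by_cases h : j = c <;> simp [Matrix.updateCol_apply, Matrix.map_apply, h]

end TvAux3


namespace TvComb

variable {α : Type*} [DecidableEq α]

lemma pad_partition :
    ∀ (k : ℕ) (T : Finset α) (G : Fin k → Finset α) (c : Fin k → ℕ),
      (∀ i, G i ⊆ T) → (∀ i j, i ≠ j → Disjoint (G i) (G j)) → (∀ i, (G i).card ≤ c i) →
      T.card ≤ ∑ i, c i →
      ∃ P : Fin k → Finset α, (∀ i, G i ⊆ P i) ∧ (∀ i, P i ⊆ T) ∧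
        (∀ i j, i ≠ j → Disjoint (P i) (P j)) ∧ (∀ i, (P i).card ≤ c i) ∧
        ∀ a ∈ T, ∃ i, a ∈ P i := by
  intro k
  induction k with
  | zero =>
    intro T G c _ _ _ hT
    have : T = ∅ := Finset.card_eq_zero.1 (by simpa using hT)
    exact ⟨fun i => i.elim0, fun i => i.elim0, fun i => i.elim0, fun i => i.elim0,
      fun i => i.elim0, fun a ha => by simp [this] at ha⟩
  | succ k ih =>
    intro T G c hGT hGdisj hGc hT
    set U : Finset α := Finset.univ.biUnion G with hU
    set t0 : Finset α := G 0 ∪ (T \ U) with ht0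
    have ht0T : t0 ⊆ T := by
      intro a ha
      rcases Finset.mem_union.1 ha with h | h
      · exact hGT 0 h
      · exact (Finset.mem_sdiff.1 h).1
    obtain ⟨P0, hGP0, hP0t0, hP0card⟩ :=
      Finset.exists_subsuperset_card_eq (Finset.subset_union_left : G 0 ⊆ t0)
        (le_min (hGc 0) (Finset.card_le_card (Finset.subset_union_left : G 0 ⊆ t0)))
        (min_le_right _ _)
    have hP0T : P0 ⊆ T := hP0t0.trans ht0T
    -- the new universe
    set T' : Finset α := T \ P0 with hT'
    have hGT' : ∀ i : Fin k, G i.succ ⊆ T' := by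
      intro i a ha
      refine Finset.mem_sdiff.2 ⟨hGT _ ha, fun haP0 => ?_⟩
      rcases Finset.mem_union.1 (hP0t0 haP0) with h | h
      · exact (Finset.disjoint_left.1 (hGdisj i.succ 0 (Fin.succ_ne_zero i))) ha h
      · exact (Finset.mem_sdiff.1 h).2 (Finset.mem_biUnion.2 ⟨i.succ, Finset.mem_univ _, ha⟩)
    have hT'card : T'.card ≤ ∑ i : Fin k, c i.succ := by
      have hcardT' : T'.card = T.card - P0.card := Finset.card_sdiff_of_subset hP0T
      rcases le_or_gt (c 0) t0.card with hle | hlt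
      · have : P0.card = c 0 := by rw [hP0card]; exact min_eq_left hle
        have hsum : ∑ i, c i = c 0 + ∑ i : Fin k, c i.succ := Fin.sum_univ_succ c
        omega
      · have hmin : min (c 0) t0.card = t0.card := min_eq_right hlt.le
        have hP0eq : P0 = t0 := Finset.eq_of_subset_of_card_le hP0t0 (by rw [hP0card, hmin])
        have hsub : T' ⊆ Finset.univ.biUnion (fun i : Fin k => G i.succ) := by
          intro a ha
          obtain ⟨haT, haP0⟩ := Finset.mem_sdiff.1 ha
          rw [hP0eq] at haP0
          have haU : a ∈ U := by
            by_contra haU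
            exact haP0 (Finset.mem_union.2 (Or.inr (Finset.mem_sdiff.2 ⟨haT, haU⟩)))
          obtain ⟨i, _, hai⟩ := Finset.mem_biUnion.1 haU
          have hi0 : i ≠ 0 := fun h => haP0 (Finset.mem_union.2 (Or.inl (h ▸ hai)))
          obtain ⟨j, rfl⟩ := Fin.eq_succ_of_ne_zero hi0
          exact Finset.mem_biUnion.2 ⟨j, Finset.mem_univ _, hai⟩
        calc T'.card ≤ _ := Finset.card_le_card hsub
          _ ≤ ∑ i : Fin k, (G i.succ).card := Finset.card_biUnion_le
          _ ≤ ∑ i : Fin k, c i.succ := Finset.sum_le_sum fun i _ => hGc i.succ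
    obtain ⟨P', hGP', hP'T', hP'disj, hP'card, hP'cover⟩ :=
      ih T' (fun i => G i.succ) (fun i => c i.succ) hGT'
        (fun i j hij => hGdisj i.succ j.succ (fun h => hij (Fin.succ_injective _ h)))
        (fun i => hGc i.succ) hT'card
    refine ⟨Fin.cases P0 P', ?_, ?_, ?_, ?_, ?_⟩
    · intro i
      refine Fin.cases ?_ ?_ i
      · simpa using hGP0
      · intro j; simpa using hGP' j
    · intro i
      refine Fin.cases ?_ ?_ i
      · simpa using hP0T
      · intro j; simpa using (hP'T' j).trans (Finset.sdiff_subset)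
    · intro i j hij
      have key : ∀ j', Disjoint P0 (P' j') := by
        intro j'
        rw [Finset.disjoint_left]
        intro a ha ha'
        exact (Finset.mem_sdiff.1 (hP'T' j' ha')).2 ha
      rcases Fin.eq_zero_or_eq_succ i with rfl | ⟨i', rfl⟩ <;>
        rcases Fin.eq_zero_or_eq_succ j with rfl | ⟨j', rfl⟩
      · exact absurd rfl hij
      · simpa using key j'
      · simpa using (key i').symm
      · simpa using hP'disj i' j' (fun h => hij (by rw [h]))
    · intro i
      refine Fin.cases ?_ ?_ i
      · simpa using hP0card.trans_le (min_le_left _ _)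
      · intro j; simpa using hP'card j
    · intro a ha
      by_cases haP0 : a ∈ P0
      · exact ⟨0, by simpa using haP0⟩
      · obtain ⟨j, hj⟩ := hP'cover a (Finset.mem_sdiff.2 ⟨ha, haP0⟩)
        exact ⟨j.succ, by simpa using hj⟩

end TvComb

namespace TvComb2
open TvComb

variable {α : Type*} [DecidableEq α]

lemma exists_partition_card_eq [Fintype α] (k : ℕ) (c : Fin k → ℕ)
    (h : ∑ i, c i = Fintype.card α) :
    ∃ B : Fin k → Finset α, (∀ i j, i ≠ j → Disjoint (B i) (B j)) ∧
      (∀ a, ∃ i, a ∈ B i) ∧ ∀ i, (B i).card = c i := by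
  obtain ⟨P, _, _, hdisj, hcard, hcover⟩ :=
    pad_partition k Finset.univ (fun _ => (∅ : Finset α)) c (fun _ => Finset.empty_subset _)
      (fun i j _ => Finset.disjoint_empty_left _) (fun i => by simp)
      (by rw [Finset.card_univ, h])
  refine ⟨P, hdisj, fun a => hcover a (Finset.mem_univ a), ?_⟩
  have huniv : Finset.univ.biUnion P = Finset.univ := by
    apply Finset.eq_univ_of_forall
    intro a
    obtain ⟨i, hi⟩ := hcover a (Finset.mem_univ a)
    exact Finset.mem_biUnion.2 ⟨i, Finset.mem_univ _, hi⟩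
  have hsum : ∑ i, (P i).card = Fintype.card α := by
    rw [← Finset.card_univ, ← huniv, Finset.card_biUnion]
    intro i _ j _ hij
    exact hdisj i j hij
  have := (Finset.sum_eq_sum_iff_of_le (fun i _ => hcard i)).1 (by rw [hsum, h])
  exact fun i => this i (Finset.mem_univ i)

lemma exists_map_finsets {β : Type*} [DecidableEq β] (s : Finset α) (t : Finset β)
    (h : s.card = t.card) (junk : β) :
    ∃ f : α → β, (∀ a ∈ s, f a ∈ t) ∧ (∀ a ∈ s, ∀ b ∈ s, f a = f b → a = b) ∧
      (∀ y ∈ t, ∃ a ∈ s, f a = y) := by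
  have hcard : Fintype.card {a // a ∈ s} = Fintype.card {b // b ∈ t} := by
    simp [Fintype.card_coe, h]
  obtain eqv := Fintype.equivOfCardEq hcard
  refine ⟨fun a => if ha : a ∈ s then (eqv ⟨a, ha⟩ : β) else junk, ?_, ?_, ?_⟩
  · intro a ha; simp only [dif_pos ha]; exact (eqv ⟨a, ha⟩).2
  · intro a ha b hb hab
    simp only [dif_pos ha, dif_pos hb] at hab
    have := eqv.injective (Subtype.ext hab)
    exact congrArg Subtype.val this
  · intro y hy
    obtain ⟨⟨a, ha⟩, hav⟩ := eqv.surjective ⟨y, hy⟩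
    exact ⟨a, ha, by simp only [dif_pos ha, hav]⟩

end TvComb2

namespace TvWit
set_option maxHeartbeats 1000000
open TvAux TvAux2 TvAux3 TvComb TvComb2

variable {d m : ℕ}

lemma exists_witness (hd : 1 ≤ d)
    (P : Fin (m + 1) → Finset (Fin (nn d m)))
    (e : Rty d m ≃ Fin (nn d m))
    (hdisj : ∀ i j, i ≠ j → Disjoint (P i) (P j))
    (hcover : ∀ v, ∃ i, v ∈ P i)
    (hne : ∀ i, (P i).Nonempty)
    (hcard : ∀ i, (P i).card ≤ d + 1) :
    ∃ (w : Fin (nn d m) → Fin d → ℚ) (μ : Rty d m → ℚ),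
      tvMat P w e *ᵥ μ = bvec ∧ (∀ c, μ c ≠ 0) ∧
      ∀ ν, tvMat P w e *ᵥ ν = bvec → ν = μ := by
  classical
  -- the block of a point
  set blk : Fin (nn d m) → Fin (m + 1) := fun v => (hcover v).choose with hblkdef
  have hblk : ∀ v, v ∈ P (blk v) := fun v => (hcover v).choose_spec
  have blk_eq : ∀ {v : Fin (nn d m)} {i}, v ∈ P i → blk v = i := by
    intro v i hv
    by_contra hne'
    exact (Finset.disjoint_left.1 (hdisj _ _ hne')) (hblk v) hv
  -- sum of cardinalities
  have hsum : ∑ i, (P i).card = nn d m := by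
    have huniv : Finset.univ.biUnion P = (Finset.univ : Finset (Fin (nn d m))) := by
      apply Finset.eq_univ_of_forall
      intro v
      exact Finset.mem_biUnion.2 ⟨blk v, Finset.mem_univ _, hblk v⟩
    rw [← Finset.card_biUnion (fun i _ j _ hij => hdisj i j hij), huniv, Finset.card_univ,
      Fintype.card_fin]
  have hcpos : ∀ i, 1 ≤ (P i).card := fun i => Finset.card_pos.2 (hne i)
  -- partition of coordinates
  have hsc : ∑ i, (d + 1 - (P i).card) = d := by
    have h1 : ∀ i : Fin (m + 1), (d + 1 - (P i).card) + (P i).card = d + 1 := fun i => by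
      have := hcard i; omega
    have h2 : ∑ i, ((d + 1 - (P i).card) + (P i).card) = (m + 1) * (d + 1) := by
      rw [Finset.sum_congr rfl (fun i _ => h1 i), Finset.sum_const, Finset.card_univ,
        Fintype.card_fin, smul_eq_mul]
    rw [Finset.sum_add_distrib, hsum] at h2
    have h3 : (m + 1) * (d + 1) = (d + 1) * m + (d + 1) := by ring
    simp only [nn] at h2 ⊢
    omega
  obtain ⟨B, hBdisj, hBcover, hBcard⟩ :=
    exists_partition_card_eq (α := Fin d) (m + 1) (fun i => d + 1 - (P i).card)
      (by rw [hsc, Fintype.card_fin])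
  -- base point of each block
  set v0 : Fin (m + 1) → Fin (nn d m) := fun i => (hne i).choose with hv0def
  have hv0 : ∀ i, v0 i ∈ P i := fun i => (hne i).choose_spec
  -- matching between non-base points and free coordinates
  have hcards : ∀ i, ((B i)ᶜ : Finset (Fin d)).card = ((P i).erase (v0 i)).card := by
    intro i
    rw [Finset.card_compl, hBcard i, Finset.card_erase_of_mem (hv0 i), Fintype.card_fin]
    have := hcard i; have := hcpos i; omega
  choose φ hφt hφinj hφsurj using fun i =>
    exists_map_finsets ((B i)ᶜ) ((P i).erase (v0 i)) (hcards i) (v0 i)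
  -- witness points
  set w : Fin (nn d m) → Fin d → ℚ := fun v j =>
    if v = v0 (blk v) then (if j ∈ B (blk v) then 0 else -1)
    else (if j ∉ B (blk v) ∧ φ (blk v) j = v then 1 else 0) with hwdef
  have hw : ∀ i, ∀ v ∈ P i, ∀ j, w v j =
      if v = v0 i then (if j ∈ B i then 0 else -1)
      else (if j ∉ B i ∧ φ i j = v then 1 else 0) := by
    intro i v hv j
    rw [hwdef]
    simp only [blk_eq hv]
  -- the column sums of the witness vanish
  have claimA : ∀ (i : Fin (m + 1)) (j : Fin d), ∑ v ∈ P i, w v j = 0 := by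
    intro i j
    rw [Finset.sum_congr rfl (fun v hv => hw i v hv j),
      ← Finset.sum_erase_add (P i) _ (hv0 i)]
    by_cases hj : j ∈ B i
    · have h2 : ∑ v ∈ (P i).erase (v0 i),
          (if v = v0 i then (if j ∈ B i then (0:ℚ) else -1)
           else (if j ∉ B i ∧ φ i j = v then 1 else 0))
          = ∑ v ∈ (P i).erase (v0 i), (0:ℚ) := by
        refine Finset.sum_congr rfl (fun v hv => ?_)
        have hv' := Finset.mem_erase.1 hv
        simp [hv'.1, hj]
      rw [h2]
      simp [hj]
    · have h2 : ∑ v ∈ (P i).erase (v0 i),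
          (if v = v0 i then (if j ∈ B i then (0:ℚ) else -1)
           else (if j ∉ B i ∧ φ i j = v then 1 else 0))
          = ∑ v ∈ (P i).erase (v0 i), (if φ i j = v then (1:ℚ) else 0) := by
        refine Finset.sum_congr rfl (fun v hv => ?_)
        have hv' := Finset.mem_erase.1 hv
        simp [hv'.1, hj]
      rw [h2, Finset.sum_ite_eq, if_pos (hφt i j (Finset.mem_compl.2 hj))]
      simp [hj]
  have hcardQ : ∀ i, ((P i).card : ℚ) ≠ 0 := fun i => by
    have := hcpos i; positivity
  -- the canonical solution
  set μ0 : Fin (nn d m) → ℚ := fun v => ((P (blk v)).card : ℚ)⁻¹ with hμ0def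
  have hμ0 : ∀ i, ∀ v ∈ P i, μ0 v = ((P i).card : ℚ)⁻¹ := fun i v hv => by
    rw [hμ0def]; simp only [blk_eq hv]
  have hsol : tvMat P w e *ᵥ (fun c => μ0 (e c)) = bvec := by
    rw [tvMat_solution_iff]
    constructor
    · intro i
      rw [Finset.sum_congr rfl (fun v hv => hμ0 i v hv), Finset.sum_const, nsmul_eq_mul]
      exact mul_inv_cancel₀ (hcardQ i)
    · intro j i'
      have key : ∀ i : Fin (m + 1), ∑ v ∈ P i, μ0 v * w v j = 0 := by
        intro i
        have h1 : ∑ v ∈ P i, μ0 v * w v j = ∑ v ∈ P i, ((P i).card : ℚ)⁻¹ * w v j :=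
          Finset.sum_congr rfl (fun v hv => by rw [hμ0 i v hv])
        rw [h1, ← Finset.mul_sum, claimA, mul_zero]
      rw [key, key]
  -- uniqueness of the solution
  have huniq : ∀ ν, tvMat P w e *ᵥ ν = bvec → ν = (fun c => μ0 (e c)) := by
    intro ν hν
    set lam : Fin (nn d m) → ℚ := fun v => ν (e.symm v) with hlamdef
    have hνlam : ν = fun c => lam (e c) := by
      funext c; rw [hlamdef]; simp
    rw [hνlam] at hν
    rw [tvMat_solution_iff] at hν
    obtain ⟨hs, hp⟩ := hν
    set y : Fin d → ℚ := fun j => ∑ v ∈ P 0, lam v * w v j with hydef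
    have hy : ∀ (i : Fin (m + 1)) (j : Fin d), ∑ v ∈ P i, lam v * w v j = y j := by
      intro i j
      refine Fin.cases ?_ ?_ i
      · rfl
      · intro i'; exact hp j i'
    have hy0 : ∀ j, y j = 0 := by
      intro j
      obtain ⟨i0, hji0⟩ := hBcover j
      rw [← hy i0 j]
      refine Finset.sum_eq_zero (fun v hv => ?_)
      rw [hw i0 v hv j]
      by_cases hvv : v = v0 i0
      · simp [hvv, hji0]
      · simp [hvv, hji0]
    have hlam_eq : ∀ i, ∀ v ∈ P i, lam v = lam (v0 i) := by
      intro i v hv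
      by_cases hvv : v = v0 i
      · rw [hvv]
      · have hverase : v ∈ (P i).erase (v0 i) := Finset.mem_erase.2 ⟨hvv, hv⟩
        obtain ⟨j, hjmem, hφv⟩ := hφsurj i v hverase
        have hj : j ∉ B i := Finset.mem_compl.1 hjmem
        have h0 : (0 : ℚ) = ∑ u ∈ P i, lam u * w u j := by rw [hy i j, hy0]
        rw [Finset.sum_congr rfl (fun u hu => by rw [hw i u hu j]),
          ← Finset.sum_erase_add (P i) _ (hv0 i)] at h0
        have h2 : ∑ u ∈ (P i).erase (v0 i),
            lam u * (if u = v0 i then (if j ∈ B i then (0:ℚ) else -1)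
              else (if j ∉ B i ∧ φ i j = u then 1 else 0))
            = ∑ u ∈ (P i).erase (v0 i), (if φ i j = u then lam u else 0) := by
          refine Finset.sum_congr rfl (fun u hu => ?_)
          have hu' := Finset.mem_erase.1 hu
          by_cases hju : φ i j = u <;> simp [hu'.1, hj, hju]
        rw [h2, Finset.sum_ite_eq, if_pos (hφv ▸ hverase)] at h0
        simp only [if_pos rfl, hj, if_false, ite_false, hφv, if_true, ite_true] at h0
        linarith
    have hlam_val : ∀ i, ∀ v ∈ P i, lam v = ((P i).card : ℚ)⁻¹ := by
      intro i v hv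
      have h1 : (1 : ℚ) = ∑ u ∈ P i, lam u := (hs i).symm
      rw [Finset.sum_congr rfl (fun u hu => hlam_eq i u hu), Finset.sum_const,
        nsmul_eq_mul] at h1
      rw [hlam_eq i v hv, inv_eq_one_div, eq_div_iff (hcardQ i)]
      linear_combination -h1
    rw [hνlam]
    funext c
    rw [hlam_val (blk (e c)) (e c) (hblk (e c))]
  refine ⟨w, fun c => μ0 (e c), hsol, fun c => ?_, huniq⟩
  exact inv_ne_zero (hcardQ (blk (e c)))

end TvWit

namespace TvPoly
open TvAux TvAux2 TvAux3 TvWit MvPolynomial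

variable {d m : ℕ}

noncomputable def Xp : Fin (nn d m) → Fin d → MvPolynomial (Fin (nn d m) × Fin d) ℚ :=
  fun v j => MvPolynomial.X (v, j)

lemma poly_det_facts (hd : 1 ≤ d)
    (P : Fin (m + 1) → Finset (Fin (nn d m)))
    (e : Rty d m ≃ Fin (nn d m))
    (hdisj : ∀ i j, i ≠ j → Disjoint (P i) (P j))
    (hcover : ∀ v, ∃ i, v ∈ P i)
    (hne : ∀ i, (P i).Nonempty)
    (hcard : ∀ i, (P i).card ≤ d + 1) :
    (tvMat P Xp e).det ≠ 0 ∧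
    ∀ c, ((tvMat P Xp e).updateCol c bvec).det ≠ 0 := by
  obtain ⟨w, μ, hsol, hμ0, huniq⟩ := exists_witness hd P e hdisj hcover hne hcard
  set f : MvPolynomial (Fin (nn d m) × Fin d) ℚ →+* ℚ :=
    (MvPolynomial.eval (fun p : Fin (nn d m) × Fin d => w p.1 p.2)) with hfdef
  have hmap : (tvMat P Xp e).map f = tvMat P w e := by
    rw [tvMat_map]
    congr 1
    funext v j
    rw [hfdef]
    simp [Xp]
  have hdet : f (tvMat P Xp e).det = (tvMat P w e).det := by
    rw [RingHom.map_det, RingHom.mapMatrix_apply, hmap]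
  have hdetw : (tvMat P w e).det ≠ 0 := det_ne_zero_of_unique_solution μ hsol huniq
  constructor
  · intro h
    rw [h, map_zero] at hdet
    exact hdetw hdet.symm
  · intro c hc
    have h1 : f ((tvMat P Xp e).updateCol c bvec).det
        = ((tvMat P w e).updateCol c bvec).det := by
      rw [RingHom.map_det, RingHom.mapMatrix_apply, updateCol_map, hmap, bvec_map]
    have h2 : ((tvMat P w e).updateCol c bvec).det = (tvMat P w e).det * μ c :=
      updateCol_det_of_mulVec _ _ _ hsol c
    rw [hc, map_zero] at h1
    rw [h2] at h1
    exact mul_ne_zero hdetw (hμ0 c) h1.symm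

end TvPoly

namespace TvGeo
open TvAux

variable {d : ℕ}

lemma sum_apply_euclid {ι : Type*} (s : Finset ι) (f : ι → EuclideanSpace ℝ (Fin d)) (j : Fin d) :
    (∑ v ∈ s, f v) j = ∑ v ∈ s, f v j :=
  map_sum (EuclideanSpace.projₗ (𝕜 := ℝ) j) f s

lemma exists_weights {n' : ℕ} (x : Fin n' → EuclideanSpace ℝ (Fin d))
    (hx : Function.Injective x) (S : Finset (Fin n')) {y : EuclideanSpace ℝ (Fin d)}
    (hy : y ∈ convexHull ℝ (x '' (S : Set (Fin n')))) :
    ∃ lam : Fin n' → ℝ, (∀ v, v ∉ S → lam v = 0) ∧ (∑ v ∈ S, lam v = 1) ∧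
      (∀ j, ∑ v ∈ S, lam v * x v j = y j) ∧ (∑ v ∈ S, lam v • x v = y) := by
  classical
  rw [← Finset.coe_image, Finset.convexHull_eq] at hy
  obtain ⟨w, hw0, hw1, hwc⟩ := hy
  have hinjS : ∀ a ∈ S, ∀ b ∈ S, x a = x b → a = b := fun a _ b _ h => hx h
  have hsum1 : ∑ v ∈ S, w (x v) = 1 := by
    rw [← Finset.sum_image hinjS]; exact hw1
  have hvec : ∑ v ∈ S, w (x v) • x v = y := by
    have h1 := Finset.centerMass_eq_of_sum_1 (S.image x) id hw1
    rw [hwc] at h1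
    have h2 : ∑ p ∈ S.image x, w p • id p = ∑ v ∈ S, w (x v) • id (x v) :=
      Finset.sum_image hinjS
    simp only [id_eq] at h1 h2
    rw [← h2, ← h1]
  refine ⟨fun v => if v ∈ S then w (x v) else 0, fun v hv => if_neg hv, ?_, ?_, ?_⟩
  · exact (Finset.sum_congr rfl (fun v hv => if_pos hv)).trans hsum1
  · intro j
    have h2 : ∑ v ∈ S, (if v ∈ S then w (x v) else 0) • x v = y :=
      (Finset.sum_congr rfl (fun v hv => by simp [hv])).trans hvec
    have h3 := congrArg (fun z : EuclideanSpace ℝ (Fin d) => z j) h2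
    simp only at h3
    rw [sum_apply_euclid] at h3
    rw [← h3]
    exact Finset.sum_congr rfl (fun v hv => by rw [PiLp.smul_apply, smul_eq_mul])
  · exact (Finset.sum_congr rfl (fun v hv => by simp [hv])).trans hvec

lemma exists_small {n' : ℕ} (x : Fin n' → EuclideanSpace ℝ (Fin d))
    (hx : Function.Injective x) (S : Finset (Fin n')) {y : EuclideanSpace ℝ (Fin d)}
    (hy : y ∈ convexHull ℝ (x '' (S : Set (Fin n')))) :
    ∃ G : Finset (Fin n'), G ⊆ S ∧ G.Nonempty ∧ G.card ≤ d + 1 ∧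
      y ∈ convexHull ℝ (x '' (G : Set (Fin n'))) := by
  classical
  rw [convexHull_eq_union] at hy
  simp only [Set.mem_iUnion] at hy
  obtain ⟨t, hts, hai, hyt⟩ := hy
  set G : Finset (Fin n') := S.filter (fun v => x v ∈ t) with hG
  have himg : x '' (G : Set (Fin n')) = (t : Set (EuclideanSpace ℝ (Fin d))) := by
    apply Set.Subset.antisymm
    · rintro p ⟨v, hv, rfl⟩
      have := (Finset.mem_filter.1 hv).2
      exact Finset.mem_coe.2 this
    · intro p hp
      obtain ⟨v, hvS, rfl⟩ := hts hp
      exact ⟨v, Finset.mem_coe.2 (Finset.mem_filter.2 ⟨Finset.mem_coe.1 hvS, Finset.mem_coe.1 hp⟩), rfl⟩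
  have himgFin : G.image x = t := Finset.coe_injective (by rw [Finset.coe_image, himg])
  have hcardG : G.card = t.card := by
    rw [← himgFin, Finset.card_image_of_injective _ hx]
  have htne : t.Nonempty := by
    rcases Finset.eq_empty_or_nonempty t with rfl | h
    · simp at hyt
    · exact h
  have hGne : G.Nonempty := by
    obtain ⟨p, hp⟩ := htne
    obtain ⟨v, hv, _⟩ := (himg ▸ Finset.mem_coe.2 hp : p ∈ x '' (G : Set (Fin n')))
    exact ⟨v, Finset.mem_coe.1 hv⟩
  have hcardt : t.card ≤ d + 1 := by
    have h1 := hai.card_le_finrank_succ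
    rw [Fintype.card_coe] at h1
    have h2 : Module.finrank ℝ (vectorSpan ℝ (Set.range ((↑) : t → EuclideanSpace ℝ (Fin d))))
        ≤ Module.finrank ℝ (EuclideanSpace ℝ (Fin d)) := Submodule.finrank_le _
    rw [finrank_euclideanSpace_fin] at h2
    omega
  refine ⟨G, Finset.filter_subset _ _, hGne, by omega, ?_⟩
  rw [himg]
  exact hyt

end TvGeo

open TvAux TvAux2 TvAux3 TvComb TvComb2 TvWit TvPoly TvGeo in
/-- Structure of Tverberg partitions of points in strongly general position:
for points with coordinates algebraically independent over ℚ, every Tverberg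
partition has a unique Tverberg point and is of Type I (one singleton class
{v} and q−1 classes of size d+1, all containing the point x v) or of
Type II (k classes of at most d points, i.e. simplices of dimension < d,
and q−k classes of size d+1, for some 1 < k ≤ min {d, q}). -/
theorem tverberg_partition_structure (d q N : ℕ) (hd : 1 ≤ d) (hq : 2 ≤ q)
    (hN : N = (d + 1) * (q - 1))
    (x : Fin (N + 1) → EuclideanSpace ℝ (Fin d))
    (hgen : AlgebraicIndependent ℚ (fun p : Fin (N + 1) × Fin d => x p.1 p.2))
    (F : Fin q → Finset (Fin (N + 1)))
    (hdisj : Pairwise fun i j => Disjoint (F i) (F j))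
    (hcover : ∀ v : Fin (N + 1), ∃ i, v ∈ F i)
    (htv : (⋂ i, convexHull ℝ (x '' (F i : Set (Fin (N + 1))))).Nonempty) :
    (∃! y : EuclideanSpace ℝ (Fin d),
        y ∈ ⋂ i, convexHull ℝ (x '' (F i : Set (Fin (N + 1))))) ∧
    ((∃ i : Fin q, ∃ v : Fin (N + 1), F i = {v} ∧
        ∀ j : Fin q, j ≠ i → (F j).card = d + 1) ∨
     (∃ k : ℕ, 1 < k ∧ k ≤ d ∧ k ≤ q ∧ ∃ s : Finset (Fin q), s.card = k ∧
        (∀ i ∈ s, (F i).card ≤ d) ∧ ∀ i ∉ s, (F i).card = d + 1)) := by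
  classical
  obtain ⟨m, rfl⟩ : ∃ m, q = m + 1 := ⟨q - 1, by omega⟩
  have hN' : N = (d + 1) * m := by simpa using hN
  subst hN'
  -- injectivity of the point family
  have haeinj : Function.Injective
      (MvPolynomial.aeval (fun p : Fin ((d+1)*m+1) × Fin d => x p.1 p.2) :
        MvPolynomial (Fin ((d+1)*m+1) × Fin d) ℚ →ₐ[ℚ] ℝ) :=
    algebraicIndependent_iff_injective_aeval.1 hgen
  have hxinj : Function.Injective x := by
    intro u v huv
    by_contra hne'
    have hXeq : (MvPolynomial.X (u, ⟨0, hd⟩) : MvPolynomial (Fin ((d+1)*m+1) × Fin d) ℚ)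
        = MvPolynomial.X (v, ⟨0, hd⟩) := by
      apply haeinj
      simp only [MvPolynomial.aeval_X]
      rw [huv]
    have := MvPolynomial.X_injective hXeq
    exact hne' (congrArg Prod.fst this)
  obtain ⟨y₀, hy₀⟩ := htv
  have hy₀i : ∀ i, y₀ ∈ convexHull ℝ (x '' ((F i : Set (Fin ((d+1)*m+1))))) :=
    fun i => Set.mem_iInter.1 hy₀ i
  have hFne : ∀ i, (F i).Nonempty := by
    intro i
    rcases Finset.eq_empty_or_nonempty (F i) with h | h
    · exfalso; have := hy₀i i; rw [h] at this; simp at this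
    · exact h
  -- fix an equivalence of index types
  have hcardR : Fintype.card (Rty d m) = Fintype.card (Fin ((d+1)*m+1)) := by
    simp only [Rty, Fintype.card_sum, Fintype.card_prod, Fintype.card_fin]
    ring
  obtain e := Fintype.equivOfCardEq hcardR
  -- Caratheodory
  choose G hGsub hGne hGcard hyG using fun i => exists_small x hxinj (F i) (hy₀i i)
  have hGdisj : ∀ i j, i ≠ j → Disjoint (G i) (G j) := fun i j hij =>
    Finset.disjoint_of_subset_left (hGsub i) (Finset.disjoint_of_subset_right (hGsub j) (hdisj hij))
  -- padding
  obtain ⟨P, hGP, -, hPdisj, hPcard, hPcover'⟩ :=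
    pad_partition (α := Fin ((d+1)*m+1)) (m+1) Finset.univ G (fun _ => d+1)
      (fun _ => Finset.subset_univ _) hGdisj hGcard
      (by simp only [Finset.card_univ, Fintype.card_fin, Finset.sum_const, Finset.card_univ,
            Fintype.card_fin, smul_eq_mul]
          nlinarith)
  have hPcover : ∀ v, ∃ i, v ∈ P i := fun v => hPcover' v (Finset.mem_univ v)
  have hPne : ∀ i, (P i).Nonempty := fun i => (hGne i).mono (hGP i)
  -- weights supported on the Caratheodory sets
  choose lamG hlamG0 hlamG1 hlamGj hlamGy using fun i => exists_weights x hxinj (G i) (hyG i)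
  set lam : Fin ((d+1)*m+1) → ℝ := fun v => ∑ i, lamG i v with hlamdef
  have hlamP : ∀ i, ∀ v ∈ P i, lam v = lamG i v := by
    intro i v hv
    rw [hlamdef]
    refine Finset.sum_eq_single i (fun j _ hji => ?_) (fun h => absurd (Finset.mem_univ i) h)
    exact hlamG0 j v (fun hvG => (Finset.disjoint_left.1 (hPdisj j i hji)) (hGP j hvG) hv)
  have hsumP : ∀ i, ∑ v ∈ P i, lam v = 1 := by
    intro i
    have h1 : ∑ v ∈ P i, lam v = ∑ v ∈ P i, lamG i v := Finset.sum_congr rfl (hlamP i)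
    rw [h1, ← Finset.sum_subset (hGP i) (fun v _ hvG => hlamG0 i v hvG)]
    exact hlamG1 i
  have hptP : ∀ i j, ∑ v ∈ P i, lam v * x v j = y₀ j := by
    intro i j
    have h1 : ∑ v ∈ P i, lam v * x v j = ∑ v ∈ P i, lamG i v * x v j :=
      Finset.sum_congr rfl (fun v hv => by rw [hlamP i v hv])
    rw [h1, ← Finset.sum_subset (hGP i) (fun v _ hvG => by rw [hlamG0 i v hvG, zero_mul])]
    exact hlamGj i j
  -- the real system matrix
  obtain ⟨hdetpoly, hupdpoly⟩ := poly_det_facts hd P e hPdisj hPcover hPne hPcard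
  set aev : MvPolynomial (Fin ((d+1)*m+1) × Fin d) ℚ →+* ℝ :=
    (MvPolynomial.aeval (fun p : Fin ((d+1)*m+1) × Fin d => x p.1 p.2) :
      MvPolynomial (Fin ((d+1)*m+1) × Fin d) ℚ →ₐ[ℚ] ℝ).toRingHom with haevdef
  have haevinj : Function.Injective aev := haeinj
  have hmapA : (tvMat P Xp e).map aev = tvMat P (fun v j => x v j) e := by
    rw [tvMat_map]
    congr 1
    funext v j
    rw [haevdef]
    simp [Xp]
  have hdetA : (tvMat P (fun v j => x v j) e).det ≠ 0 := by
    rw [← hmapA]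
    intro h
    have h2 : aev (tvMat P Xp e).det = 0 := by
      rw [RingHom.map_det, RingHom.mapMatrix_apply, h]
    exact hdetpoly (haevinj (by rw [h2, map_zero]))
  have hsolA : tvMat P (fun v j => x v j) e *ᵥ (fun c => lam (e c)) = bvec :=
    (tvMat_solution_iff P (fun v j => x v j) e lam).2
      ⟨hsumP, fun j i' => by rw [hptP, hptP]⟩
  -- every point is used by the Caratheodory sets
  have hGcover : ∀ v, ∃ i, v ∈ G i := by
    by_contra hcon
    push_neg at hcon
    obtain ⟨vs, hvs⟩ := hcon
    have hlam0 : lam vs = 0 := by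
      rw [hlamdef]
      exact Finset.sum_eq_zero (fun i _ => hlamG0 i _ (hvs i))
    have hupd := updateCol_det_of_mulVec (tvMat P (fun v j => x v j) e) _ bvec hsolA
      (e.symm vs)
    have hzero : ((tvMat P (fun v j => x v j) e).updateCol (e.symm vs) bvec).det = 0 := by
      rw [hupd]
      simp [hlam0]
    have hmap2 : aev (((tvMat P Xp e).updateCol (e.symm vs) bvec).det)
        = ((tvMat P (fun v j => x v j) e).updateCol (e.symm vs) bvec).det := by
      rw [RingHom.map_det, RingHom.mapMatrix_apply, updateCol_map, hmapA, bvec_map]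
    rw [hzero] at hmap2
    exact hupdpoly (e.symm vs) (haevinj (by rw [hmap2, map_zero]))
  have hGF : ∀ i, G i = F i := by
    intro i
    apply Finset.Subset.antisymm (hGsub i)
    intro v hv
    obtain ⟨j, hj⟩ := hGcover v
    have hji : j = i := by
      by_contra hji
      exact (Finset.disjoint_left.1 (hdisj hji)) (hGsub j hj) hv
    exact hji ▸ hj
  have hPF : ∀ i, P i = F i := by
    intro i
    apply Finset.Subset.antisymm
    · intro v hv
      obtain ⟨j, hj⟩ := hGcover v
      have hji : j = i := by
        by_contra hji
        exact (Finset.disjoint_left.1 (hPdisj j i hji)) (hGP j hj) hv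
      rw [← hGF i]
      exact hji ▸ hj
    · rw [← hGF i]
      exact hGP i
  have hFcard : ∀ i, (F i).card ≤ d + 1 := fun i => hPF i ▸ hPcard i
  have hFpos : ∀ i, 1 ≤ (F i).card := fun i => Finset.card_pos.2 (hFne i)
  constructor
  · -- uniqueness of the Tverberg point
    refine ⟨y₀, hy₀, ?_⟩
    intro y' hy'
    choose lamG' hlamG0' hlamG1' hlamGj' hlamGy' using fun i =>
      exists_weights x hxinj (F i) (Set.mem_iInter.1 hy' i)
    set lam' : Fin ((d+1)*m+1) → ℝ := fun v => ∑ i, lamG' i v with hlam'def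
    have hlamP' : ∀ i, ∀ v ∈ P i, lam' v = lamG' i v := by
      intro i v hv
      rw [hlam'def]
      refine Finset.sum_eq_single i (fun j _ hji => ?_) (fun h => absurd (Finset.mem_univ i) h)
      refine hlamG0' j v (fun hvF => ?_)
      exact (Finset.disjoint_left.1 (hPdisj j i hji)) ((hPF j).symm ▸ hvF) hv
    have hsumP' : ∀ i, ∑ v ∈ P i, lam' v = 1 := by
      intro i
      have h1 : ∑ v ∈ P i, lam' v = ∑ v ∈ P i, lamG' i v := Finset.sum_congr rfl (hlamP' i)
      rw [h1, hPF i]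
      exact hlamG1' i
    have hptP' : ∀ i j, ∑ v ∈ P i, lam' v * x v j = y' j := by
      intro i j
      have h1 : ∑ v ∈ P i, lam' v * x v j = ∑ v ∈ P i, lamG' i v * x v j :=
        Finset.sum_congr rfl (fun v hv => by rw [hlamP' i v hv])
      rw [h1, hPF i]
      exact hlamGj' i j
    have hsolA' : tvMat P (fun v j => x v j) e *ᵥ (fun c => lam' (e c)) = bvec :=
      (tvMat_solution_iff P (fun v j => x v j) e lam').2
        ⟨hsumP', fun j i' => by rw [hptP', hptP']⟩
    have heq := eq_of_mulVec_eq hdetA (hsolA'.trans hsolA.symm)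
    have hlameq : lam' = lam := by
      funext v
      have := congrFun heq (e.symm v)
      simpa using this
    have hy0rep : ∑ v ∈ P 0, lam v • x v = y₀ := by
      have h1 : ∑ v ∈ P 0, lam v • x v = ∑ v ∈ P 0, lamG 0 v • x v :=
        Finset.sum_congr rfl (fun v hv => by rw [hlamP 0 v hv])
      have h2 : ∑ v ∈ G 0, lamG 0 v • x v = ∑ v ∈ P 0, lamG 0 v • x v :=
        Finset.sum_subset (hGP 0) (fun v _ hvG => by rw [hlamG0 0 v hvG, zero_smul])
      rw [h1, ← h2]
      exact hlamGy 0
    have hy'rep : ∑ v ∈ P 0, lam' v • x v = y' := by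
      have h1 : ∑ v ∈ P 0, lam' v • x v = ∑ v ∈ P 0, lamG' 0 v • x v :=
        Finset.sum_congr rfl (fun v hv => by rw [hlamP' 0 v hv])
      rw [h1, hPF 0]
      exact hlamGy' 0
    rw [← hy'rep, hlameq, hy0rep]
  · -- the combinatorial structure
    have hsumF : ∑ i, (F i).card = (d+1)*m+1 := by
      have huniv : Finset.univ.biUnion F = (Finset.univ : Finset (Fin ((d+1)*m+1))) := by
        apply Finset.eq_univ_of_forall
        intro v
        obtain ⟨i, hi⟩ := hcover v
        exact Finset.mem_biUnion.2 ⟨i, Finset.mem_univ _, hi⟩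
      rw [← Finset.card_biUnion (fun i _ j _ hij => hdisj hij), huniv, Finset.card_univ,
        Fintype.card_fin]
    set T := Finset.univ.filter (fun i => (F i).card ≤ d) with hTdef
    have hdef : ∑ i ∈ T, (d + 1 - (F i).card) = d := by
      have h1 : ∑ i, (d + 1 - (F i).card)
          = ∑ i ∈ T, (d + 1 - (F i).card) := by
        rw [← Finset.sum_filter_add_sum_filter_not Finset.univ (fun i => (F i).card ≤ d)]
        have h2 : ∑ i ∈ Finset.univ.filter (fun i => ¬ (F i).card ≤ d),
            (d + 1 - (F i).card) = 0 :=
          Finset.sum_eq_zero (fun i hi => by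
            have h3 := (Finset.mem_filter.1 hi).2
            have h4 := hFcard i
            omega)
        rw [h2, add_zero]
      have h3 : ∀ i : Fin (m+1), (d + 1 - (F i).card) + (F i).card = d + 1 := fun i => by
        have := hFcard i; omega
      have h4 : ∑ i, ((d + 1 - (F i).card) + (F i).card) = (m+1) * (d+1) := by
        rw [Finset.sum_congr rfl (fun i _ => h3 i), Finset.sum_const, Finset.card_univ,
          Fintype.card_fin, smul_eq_mul]
      rw [Finset.sum_add_distrib, hsumF] at h4
      have h5 : (m+1)*(d+1) = (d+1)*m + (d+1) := by ring
      rw [← h1]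
      omega
    have hTpos : 1 ≤ T.card := by
      rcases Finset.eq_empty_or_nonempty T with h | h
      · rw [h] at hdef; simp at hdef; omega
      · exact Finset.card_pos.2 h
    have hTled : T.card ≤ d := by
      calc T.card = ∑ _i ∈ T, 1 := by simp
        _ ≤ ∑ i ∈ T, (d + 1 - (F i).card) := Finset.sum_le_sum (fun i hi => by
            have := (Finset.mem_filter.1 hi).2; have := hFpos i; omega)
        _ = d := hdef
    rcases eq_or_lt_of_le hTpos with h1 | h1
    · left
      obtain ⟨i0, hi0⟩ := Finset.card_eq_one.1 h1.symm
      have hi0T : i0 ∈ T := by rw [hi0]; exact Finset.mem_singleton_self i0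
      have hs1 : (F i0).card = 1 := by
        have h6 : ∑ i ∈ T, (d + 1 - (F i).card) = d + 1 - (F i0).card := by
          rw [hi0, Finset.sum_singleton]
        have h7 := (Finset.mem_filter.1 hi0T).2
        have h8 := hFpos i0
        omega
      obtain ⟨v, hv⟩ := Finset.card_eq_one.1 hs1
      refine ⟨i0, v, hv, fun j hji => ?_⟩
      have hjT : j ∉ T := by rw [hi0]; simp [hji]
      have h9 : ¬ (F j).card ≤ d := fun h =>
        hjT (Finset.mem_filter.2 ⟨Finset.mem_univ _, h⟩)
      have := hFcard j
      omega
    · right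
      refine ⟨T.card, h1, hTled, ?_, T, rfl, fun i hi => (Finset.mem_filter.1 hi).2,
        fun i hi => ?_⟩
      · calc T.card ≤ Fintype.card (Fin (m+1)) := Finset.card_le_univ T
          _ = m + 1 := Fintype.card_fin _
      · have h9 : ¬ (F i).card ≤ d := fun h =>
          hi (Finset.mem_filter.2 ⟨Finset.mem_univ _, h⟩)
        have := hFcard i
        omega
end

section
/- For q = 2, the single edge K₂ is not a constraint graph: for every d ≥ 1 there exist an affine map f : ‖σ^{d+1}‖ → ℝ^d and an edge e of σ^{d+1} such that every Tverberg partition of f into 2 disjoint faces uses the edge e (i.e., some partition class contains both endpoints of e). -/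
/-!
Take the vertices `p₀, …, p_d` of a `d`-simplex in `ℝ^d` together with an interior point
`g = ∑ μᵢ pᵢ` (all `μᵢ > 0`). By affine independence of the `pᵢ`, every affine dependence of
these `d + 2` points is a multiple of `g - ∑ μᵢ pᵢ = 0`. Two faces whose hulls meet give a nonzero
affine dependence which is positive only on the first face and negative only on the second, so all
vertices `pᵢ` lie in the same face; any two of them span an edge used by every partition.
-/

open Finset

section RadonPartition

variable {ι E : Type*} [Fintype ι] [AddCommGroup E] [Module ℝ E]

theorem exists_weights_of_mem_convexHull_image (x : ι → E) (F : Finset ι) {p : E}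
    (hp : p ∈ convexHull ℝ (x '' (F : Set ι))) :
    ∃ a : ι → ℝ, (∀ i, 0 ≤ a i) ∧ (∀ i ∉ F, a i = 0) ∧ ∑ i, a i = 1 ∧ ∑ i, a i • x i = p := by
  classical
  refine convexHull_min (t := {p | ∃ a : ι → ℝ, (∀ i, 0 ≤ a i) ∧ (∀ i ∉ F, a i = 0) ∧
    ∑ i, a i = 1 ∧ ∑ i, a i • x i = p}) ?_ ?_ hp
  · rintro _ ⟨i, hi, rfl⟩
    exact ⟨Pi.single i 1, Pi.single_nonneg (α := fun _ => ℝ).2 zero_le_one,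
      fun j hj => Pi.single_eq_of_ne (by rintro rfl; exact hj hi) 1, by simp, by simp⟩
  · rintro _ ⟨a, ha₀, haF, ha₁, rfl⟩ _ ⟨b, hb₀, hbF, hb₁, rfl⟩ s t hs ht hst
    refine ⟨s • a + t • b, fun i => ?_, fun i hi => ?_, ?_, ?_⟩
    · simp only [Pi.add_apply, Pi.smul_apply, smul_eq_mul]
      exact add_nonneg (mul_nonneg hs (ha₀ i)) (mul_nonneg ht (hb₀ i))
    · simp [haF i hi, hbF i hi]
    · simp [sum_add_distrib, ← mul_sum, ha₁, hb₁, hst]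
    · simp [add_smul, mul_smul, sum_add_distrib, ← smul_sum]

theorem exists_affineDependence_of_convexHull_inter_nonempty (x : ι → E) {F₁ F₂ : Finset ι}
    (hF : Disjoint F₁ F₂)
    (h : (convexHull ℝ (x '' (F₁ : Set ι)) ∩ convexHull ℝ (x '' (F₂ : Set ι))).Nonempty) :
    ∃ c : ι → ℝ, c ≠ 0 ∧ ∑ i, c i = 0 ∧ ∑ i, c i • x i = 0 ∧
      (∀ i, 0 < c i → i ∈ F₁) ∧ (∀ i, c i < 0 → i ∈ F₂) := by
  obtain ⟨p, hp₁, hp₂⟩ := h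
  obtain ⟨a, ha₀, haF, ha₁, hap⟩ := exists_weights_of_mem_convexHull_image x F₁ hp₁
  obtain ⟨b, hb₀, hbF, hb₁, hbp⟩ := exists_weights_of_mem_convexHull_image x F₂ hp₂
  have mem_F₁ : ∀ i, b i < a i → i ∈ F₁ := fun i hi => by
    by_contra h; linarith [haF i h, hb₀ i]
  refine ⟨a - b, fun hab => ?_, ?_, ?_, fun i hi => mem_F₁ i (by simpa using hi),
    fun i hi => ?_⟩
  · obtain ⟨i, -, hi⟩ := exists_ne_zero_of_sum_ne_zero (s := univ) (f := a) (by simp [ha₁])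
    have hiF₁ : i ∈ F₁ := by by_contra h; exact hi (haF i h)
    have hbi : b i = 0 := hbF i (disjoint_left.mp hF hiF₁)
    exact hi (by simpa [hbi] using congrFun hab i)
  · simp [sum_sub_distrib, ha₁, hb₁]
  · simp [sub_smul, sum_sub_distrib, hap, hbp]
  · by_contra h; rw [Pi.sub_apply, sub_neg] at hi; linarith [hbF i h, ha₀ i]

end RadonPartition

section InteriorPoint

variable {E : Type*} [AddCommGroup E] [Module ℝ E]

theorem AffineIndependent.eq_neg_mul_of_affineDependence_snoc {n : ℕ} {p : Fin (n + 1) → E}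
    (hp : AffineIndependent ℝ p) {μ : Fin (n + 1) → ℝ} (hμ : ∑ i, μ i = 1)
    {c : Fin (n + 2) → ℝ} (hc₀ : ∑ i, c i = 0)
    (hc₁ : ∑ i, c i • Fin.snoc (α := fun _ => E) p (∑ j, μ j • p j) i = 0) (i : Fin (n + 1)) :
    c i.castSucc = -(c (Fin.last _) * μ i) := by
  rw [Fin.sum_univ_castSucc] at hc₀ hc₁
  simp only [Fin.snoc_castSucc, Fin.snoc_last] at hc₁
  have hw₀ : ∑ j, (c j.castSucc + c (Fin.last _) * μ j) = 0 := by
    rw [sum_add_distrib, ← mul_sum, hμ, mul_one, hc₀]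
  have hw₁ : ∑ j, (c j.castSucc + c (Fin.last _) * μ j) • p j = 0 := by
    simp only [add_smul, mul_smul, sum_add_distrib, ← smul_sum, hc₁]
  linarith [hp.eq_zero_of_sum_eq_zero hw₀ hw₁ i (mem_univ i)]

theorem AffineIndependent.forall_castSucc_mem_or_of_snoc_convexHull_inter_nonempty {n : ℕ}
    {p : Fin (n + 1) → E} (hp : AffineIndependent ℝ p) {μ : Fin (n + 1) → ℝ}
    (hμ₀ : ∀ i, 0 < μ i) (hμ : ∑ i, μ i = 1)
    {F₁ F₂ : Finset (Fin (n + 2))} (hF : Disjoint F₁ F₂)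
    (h : (convexHull ℝ (Fin.snoc (α := fun _ => E) p (∑ j, μ j • p j) '' (F₁ : Set _)) ∩
      convexHull ℝ (Fin.snoc (α := fun _ => E) p (∑ j, μ j • p j) '' (F₂ : Set _))).Nonempty) :
    (∀ i : Fin (n + 1), i.castSucc ∈ F₁) ∨ (∀ i : Fin (n + 1), i.castSucc ∈ F₂) := by
  obtain ⟨c, hc, hc₀, hc₁, hF₁, hF₂⟩ := exists_affineDependence_of_convexHull_inter_nonempty _ hF h
  have hcp := hp.eq_neg_mul_of_affineDependence_snoc hμ hc₀ hc₁
  rcases lt_trichotomy (c (Fin.last _)) 0 with hneg | hzero | hpos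
  · exact .inl fun i => hF₁ _ (by rw [hcp]; nlinarith [hμ₀ i])
  · refine absurd (funext fun i => ?_) hc
    induction i using Fin.lastCases with
    | last => exact hzero
    | cast i => simp [hcp, hzero]
  · exact .inr fun i => hF₂ _ (by rw [hcp]; nlinarith [hμ₀ i])

end InteriorPoint

/-- For q = 2 the single edge K₂ is not a constraint graph: for every d ≥ 1
there is an affine map of σ^{d+1} to ℝ^d (given by a point configuration
x : [d+2] → ℝ^d, sending a point of the simplex with weights w to ∑ w_j x_j)
and an edge {u, v} of σ^{d+1} such that every Tverberg partition of the map
into 2 disjoint faces uses the edge {u, v}. -/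
theorem K2_not_constraint_graph_for_q_two (d : ℕ) (hd : 1 ≤ d) :
    ∃ x : Fin (d + 2) → EuclideanSpace ℝ (Fin d), ∃ u v : Fin (d + 2), u ≠ v ∧
      ∀ F₁ F₂ : Finset (Fin (d + 2)), Disjoint F₁ F₂ →
        (convexHull ℝ (x '' (F₁ : Set (Fin (d + 2)))) ∩
          convexHull ℝ (x '' (F₂ : Set (Fin (d + 2))))).Nonempty →
        (u ∈ F₁ ∧ v ∈ F₁) ∨ (u ∈ F₂ ∧ v ∈ F₂) := by
  obtain ⟨b⟩ : Nonempty (AffineBasis (Fin (d + 1)) ℝ (EuclideanSpace ℝ (Fin d))) :=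
    AffineBasis.exists_affineBasis_of_finiteDimensional (by simp)
  have hμ : ∑ _i : Fin (d + 1), ((d : ℝ) + 1)⁻¹ = 1 := by simp [field]
  refine ⟨Fin.snoc (α := fun _ => _) b (∑ j, ((d : ℝ) + 1)⁻¹ • b j), (0 : Fin (d + 1)).castSucc,
    (⟨1, by omega⟩ : Fin (d + 1)).castSucc, by simp, fun F₁ F₂ hF h => ?_⟩
  rcases b.ind.forall_castSucc_mem_or_of_snoc_convexHull_inter_nonempty
    (fun _ => by positivity) hμ hF h with h | h
  · exact .inl ⟨h _, h _⟩
  · exact .inr ⟨h _, h _⟩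
end
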